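/- For every product p and every closed μLf formula φf, the LTS F|p satisfies the translated formula sm(φf, p) (at its initial state, with empty environment) if and only if p satisfies φf with respect to the FTS F (at its initial state, with empty environment). -/

import Mathlib

namespace SPLmu

/-- A feature transition system: `theta s a t` is the feature expression
(identified with the set of products satisfying it) guarding the transition. -/
structure FTS (S A P : Type) where
  theta : S → A → S → Set P
  init : S

/-- A labeled transition system. -/
structure LTS (S A : Type) where
  trans : S → A → S → Prop
  init : S

/-- Projection of an FTS onto a product. -/
def FTS.proj {S A P : Type} (F : FTS S A P) (p : P) : LTS S A :=
  ⟨fun s a t => p ∈ F.theta s a t, F.init⟩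

/-- Knaster–Tarski least (pre)fixpoint. -/
def slfp {α : Type} (f : Set α → Set α) : Set α := ⋂₀ {V | f V ⊆ V}

/-- Knaster–Tarski greatest (post)fixpoint. -/
def sgfp {α : Type} (f : Set α → Set α) : Set α := ⋃₀ {V | V ⊆ f V}

/-- The modal mu-calculus μL. -/
inductive MuL (A X : Type) : Type where
  | bot | top
  | neg : MuL A X → MuL A X
  | or  : MuL A X → MuL A X → MuL A X
  | and : MuL A X → MuL A X → MuL A X
  | dia : A → MuL A X → MuL A X
  | box : A → MuL A X → MuL A X
  | var : X → MuL A X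
  | mu  : X → MuL A X → MuL A X
  | nu  : X → MuL A X → MuL A X

/-- The feature mu-calculus μLf (also used as the syntax of μL'f, whose
modality ⟪a|χ⟫ corresponds to `dia`; the translation `fm` is then the identity). -/
inductive MuLf (A X P : Type) : Type where
  | bot | top
  | neg : MuLf A X P → MuLf A X P
  | or  : MuLf A X P → MuLf A X P → MuLf A X P
  | and : MuLf A X P → MuLf A X P → MuLf A X P
  | dia : A → Set P → MuLf A X P → MuLf A X P
  | box : A → Set P → MuLf A X P → MuLf A X P
  | var : X → MuLf A X P
  | mu  : X → MuLf A X P → MuLf A X P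
  | nu  : X → MuLf A X P → MuLf A X P

variable {S A X P : Type}

/-- Standard μL semantics over an LTS. -/
def MuL.sem [DecidableEq X] (L : LTS S A) : MuL A X → (X → Set S) → Set S
  | .bot, _ => ∅
  | .top, _ => Set.univ
  | .neg φ, ε => (MuL.sem L φ ε)ᶜ
  | .or φ ψ, ε => MuL.sem L φ ε ∪ MuL.sem L ψ ε
  | .and φ ψ, ε => MuL.sem L φ ε ∩ MuL.sem L ψ ε
  | .dia a φ, ε => {s | ∃ t, L.trans s a t ∧ t ∈ MuL.sem L φ ε}
  | .box a φ, ε => {s | ∀ t, L.trans s a t → t ∈ MuL.sem L φ ε}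
  | .var x, ε => ε x
  | .mu x φ, ε => slfp (fun V => MuL.sem L φ (Function.update ε x V))
  | .nu x φ, ε => sgfp (fun V => MuL.sem L φ (Function.update ε x V))

/-- Product-based μLf semantics over an FTS (sets of state-product pairs). -/
def MuLf.sem [DecidableEq X] (F : FTS S A P) : MuLf A X P → (X → Set (S × P)) → Set (S × P)
  | .bot, _ => ∅
  | .top, _ => Set.univ
  | .neg φ, η => (MuLf.sem F φ η)ᶜ
  | .or φ ψ, η => MuLf.sem F φ η ∪ MuLf.sem F ψ η
  | .and φ ψ, η => MuLf.sem F φ η ∩ MuLf.sem F ψ η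
  | .dia a χ φ, η =>
      {sp | sp.2 ∈ χ ∧ ∃ t, sp.2 ∈ F.theta sp.1 a t ∧ (t, sp.2) ∈ MuLf.sem F φ η}
  | .box a χ φ, η =>
      {sp | sp.2 ∈ χ → ∀ t, sp.2 ∈ F.theta sp.1 a t → (t, sp.2) ∈ MuLf.sem F φ η}
  | .var x, η => η x
  | .mu x φ, η => slfp (fun V => MuLf.sem F φ (Function.update η x V))
  | .nu x φ, η => sgfp (fun V => MuLf.sem F φ (Function.update η x V))

/-- Family-based μL'f semantics over an FTS (sets of state-family pairs);
here `dia` plays the role of the family modality ⟪a|χ⟫. -/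
def MuLf.fsem [DecidableEq X] (F : FTS S A P) :
    MuLf A X P → (X → Set (S × Set P)) → Set (S × Set P)
  | .bot, _ => ∅
  | .top, _ => Set.univ
  | .neg φ, ζ => (MuLf.fsem F φ ζ)ᶜ
  | .or φ ψ, ζ => MuLf.fsem F φ ζ ∪ MuLf.fsem F ψ ζ
  | .and φ ψ, ζ => MuLf.fsem F φ ζ ∩ MuLf.fsem F ψ ζ
  | .dia a χ φ, ζ =>
      {sP | sP.2 ⊆ χ ∧ ∃ t, sP.2 ⊆ F.theta sP.1 a t ∧
        (t, sP.2 ∩ χ ∩ F.theta sP.1 a t) ∈ MuLf.fsem F φ ζ}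
  | .box a χ φ, ζ =>
      {sP | (sP.2 ∩ χ).Nonempty → ∀ t, (sP.2 ∩ χ ∩ F.theta sP.1 a t).Nonempty →
        (t, sP.2 ∩ χ ∩ F.theta sP.1 a t) ∈ MuLf.fsem F φ ζ}
  | .var x, ζ => ζ x
  | .mu x φ, ζ => slfp (fun W => MuLf.fsem F φ (Function.update ζ x W))
  | .nu x φ, ζ => sgfp (fun W => MuLf.fsem F φ (Function.update ζ x W))

-- The translation sm : μLf × 𝒫 → μL.
open Classical in
noncomputable def MuLf.sm : MuLf A X P → P → MuL A X
  | .bot, _ => .bot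
  | .top, _ => .top
  | .neg φ, p => .neg (MuLf.sm φ p)
  | .or φ ψ, p => .or (MuLf.sm φ p) (MuLf.sm ψ p)
  | .and φ ψ, p => .and (MuLf.sm φ p) (MuLf.sm ψ p)
  | .dia a χ φ, p => if p ∈ χ then .dia a (MuLf.sm φ p) else .bot
  | .box a χ φ, p => if p ∈ χ then .box a (MuLf.sm φ p) else .top
  | .var x, _ => .var x
  | .mu x φ, p => .mu x (MuLf.sm φ p)
  | .nu x φ, p => .nu x (MuLf.sm φ p)

/-- Free variables of a μLf formula. -/
def MuLf.fv : MuLf A X P → Set X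
  | .bot => ∅
  | .top => ∅
  | .neg φ => MuLf.fv φ
  | .or φ ψ => MuLf.fv φ ∪ MuLf.fv ψ
  | .and φ ψ => MuLf.fv φ ∪ MuLf.fv ψ
  | .dia _ _ φ => MuLf.fv φ
  | .box _ _ φ => MuLf.fv φ
  | .var x => {x}
  | .mu x φ => MuLf.fv φ \ {x}
  | .nu x φ => MuLf.fv φ \ {x}

/-- A μLf formula is closed if it has no free variables. -/
def MuLf.closed (φ : MuLf A X P) : Prop := MuLf.fv φ = ∅

/-- Negation-free μLf formulas. -/
def MuLf.negFree : MuLf A X P → Prop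
  | .bot => True
  | .top => True
  | .neg _ => False
  | .or φ ψ => MuLf.negFree φ ∧ MuLf.negFree ψ
  | .and φ ψ => MuLf.negFree φ ∧ MuLf.negFree ψ
  | .dia _ _ φ => MuLf.negFree φ
  | .box _ _ φ => MuLf.negFree φ
  | .var _ => True
  | .mu _ φ => MuLf.negFree φ
  | .nu _ φ => MuLf.negFree φ

/-- Diamond-free μLf formulas (no ⟨a|χ⟩ / ⟪a|χ⟫). -/
def MuLf.diaFree : MuLf A X P → Prop
  | .bot => True
  | .top => True
  | .neg φ => MuLf.diaFree φ
  | .or φ ψ => MuLf.diaFree φ ∧ MuLf.diaFree ψ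
  | .and φ ψ => MuLf.diaFree φ ∧ MuLf.diaFree ψ
  | .dia _ _ _ => False
  | .box _ _ φ => MuLf.diaFree φ
  | .var _ => True
  | .mu _ φ => MuLf.diaFree φ
  | .nu _ φ => MuLf.diaFree φ

mutual
/-- All free occurrences of `x` are under an even number of negations. -/
def MuLf.posIn (x : X) : MuLf A X P → Prop
  | .bot => True
  | .top => True
  | .neg φ => MuLf.negOcc x φ
  | .or φ ψ => MuLf.posIn x φ ∧ MuLf.posIn x ψ
  | .and φ ψ => MuLf.posIn x φ ∧ MuLf.posIn x ψ
  | .dia _ _ φ => MuLf.posIn x φ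
  | .box _ _ φ => MuLf.posIn x φ
  | .var _ => True
  | .mu y φ => y = x ∨ MuLf.posIn x φ
  | .nu y φ => y = x ∨ MuLf.posIn x φ

/-- All free occurrences of `x` are under an odd number of negations. -/
def MuLf.negOcc (x : X) : MuLf A X P → Prop
  | .bot => True
  | .top => True
  | .neg φ => MuLf.posIn x φ
  | .or φ ψ => MuLf.negOcc x φ ∧ MuLf.negOcc x ψ
  | .and φ ψ => MuLf.negOcc x φ ∧ MuLf.negOcc x ψ
  | .dia _ _ φ => MuLf.negOcc x φ
  | .box _ _ φ => MuLf.negOcc x φ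
  | .var y => y ≠ x
  | .mu y φ => y = x ∨ MuLf.negOcc x φ
  | .nu y φ => y = x ∨ MuLf.negOcc x φ
end

/-- Well-formedness: fixpoint-bound variables occur positively. -/
def MuLf.wf : MuLf A X P → Prop
  | .bot => True
  | .top => True
  | .neg φ => MuLf.wf φ
  | .or φ ψ => MuLf.wf φ ∧ MuLf.wf ψ
  | .and φ ψ => MuLf.wf φ ∧ MuLf.wf ψ
  | .dia _ _ φ => MuLf.wf φ
  | .box _ _ φ => MuLf.wf φ
  | .var _ => True
  | .mu x φ => MuLf.posIn x φ ∧ MuLf.wf φ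
  | .nu x φ => MuLf.posIn x φ ∧ MuLf.wf φ

/-- Substitution φ[¬X/X] of ¬X for the free occurrences of X. -/
def MuLf.substNegVar [DecidableEq X] (x : X) : MuLf A X P → MuLf A X P
  | .bot => .bot
  | .top => .top
  | .neg φ => .neg (MuLf.substNegVar x φ)
  | .or φ ψ => .or (MuLf.substNegVar x φ) (MuLf.substNegVar x ψ)
  | .and φ ψ => .and (MuLf.substNegVar x φ) (MuLf.substNegVar x ψ)
  | .dia a χ φ => .dia a χ (MuLf.substNegVar x φ)
  | .box a χ φ => .box a χ (MuLf.substNegVar x φ)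
  | .var y => if y = x then .neg (.var y) else .var y
  | .mu y φ => if y = x then .mu y φ else .mu y (MuLf.substNegVar x φ)
  | .nu y φ => if y = x then .nu y φ else .nu y (MuLf.substNegVar x φ)

/-- Projection from state-family sets to state-product sets. -/
def fp {S P : Type} (W : Set (S × Set P)) : Set (S × P) :=
  {sp | ∃ Pf : Set P, (sp.1, Pf) ∈ W ∧ sp.2 ∈ Pf}


/-! By induction on `φ`, the semantics of `sm φ p` on `F|p` is the slice at `p` of the semantics
of `φ` on `F`, i.e. its preimage under the injection `s ↦ (s, p)`. The modal cases hold because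
the transitions of `F|p` are those of `F` enabled for `p`; the fixpoint cases hold because preimage
under an injection commutes with least and greatest fixpoints of operators it intertwines. -/

section Fixpoints

variable {α β : Type} {i : α → β} {f : Set α → Set α} {g : Set β → Set β}

/-- For `lfp g ⊆ …` the witness is the largest set with preimage `V`, namely `(i '' Vᶜ)ᶜ`. -/
theorem preimage_slfp (hi : Function.Injective i) (h : ∀ W, i ⁻¹' g W = f (i ⁻¹' W)) :
    i ⁻¹' slfp g = slfp f := by
  apply Set.Subset.antisymm
  · intro a ha V hV
    have hpre : g (i '' Vᶜ)ᶜ ⊆ (i '' Vᶜ)ᶜ := by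
      rintro _ hx ⟨b, hbV, rfl⟩
      have hb : b ∈ f (i ⁻¹' (i '' Vᶜ)ᶜ) := h _ ▸ hx
      rw [Set.preimage_compl, hi.preimage_image, compl_compl] at hb
      exact hbV (hV hb)
    simpa [hi.mem_set_image] using ha _ hpre
  · intro a ha W hW
    exact ha (i ⁻¹' W) ((h W).ge.trans (Set.preimage_mono hW))

/-- For `… ⊆ gfp g` the witness is the image `i '' V`. -/
theorem preimage_sgfp (hi : Function.Injective i) (h : ∀ W, i ⁻¹' g W = f (i ⁻¹' W)) :
    i ⁻¹' sgfp g = sgfp f := by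
  apply Set.Subset.antisymm
  · rintro a ⟨W, hW, ha⟩
    exact ⟨i ⁻¹' W, (Set.preimage_mono hW).trans (h W).le, ha⟩
  · rintro a ⟨V, hV, ha⟩
    refine ⟨i '' V, ?_, a, ha, rfl⟩
    rintro _ ⟨b, hb, rfl⟩
    have hb' := hV hb
    rwa [← hi.preimage_image V, ← h] at hb'

end Fixpoints

theorem MuLf.sem_sm_eq_preimage [DecidableEq X] (F : FTS S A P) (p : P) (phi : MuLf A X P)
    (η : X → Set (S × P)) :
    MuL.sem (F.proj p) (phi.sm p) (fun x => (·, p) ⁻¹' η x) =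
      (·, p) ⁻¹' MuLf.sem F phi η := by
  have update_slice : ∀ (η : X → Set (S × P)) x W,
      Function.update (fun y => (·, p) ⁻¹' η y) x ((·, p) ⁻¹' W) =
        fun y => (·, p) ⁻¹' Function.update η x W y := fun η x W =>
    funext fun y => (Function.apply_update (fun _ V => (·, p) ⁻¹' V) η x W y).symm
  induction phi generalizing η with
  | bot | top | var => rfl
  | neg φ ih => simp only [MuLf.sm, MuL.sem, MuLf.sem, ih, Set.preimage_compl]
  | or φ ψ ihφ ihψ => simp only [MuLf.sm, MuL.sem, MuLf.sem, ihφ, ihψ, Set.preimage_union]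
  | and φ ψ ihφ ihψ => simp only [MuLf.sm, MuL.sem, MuLf.sem, ihφ, ihψ, Set.preimage_inter]
  | dia a χ φ ih =>
    ext s
    by_cases hp : p ∈ χ
    · simp [MuLf.sm, MuL.sem, MuLf.sem, hp, ih]; rfl
    · simp [MuLf.sm, MuL.sem, MuLf.sem, hp]
  | box a χ φ ih =>
    ext s
    by_cases hp : p ∈ χ
    · simp [MuLf.sm, MuL.sem, MuLf.sem, hp, ih]; rfl
    · simp [MuLf.sm, MuL.sem, MuLf.sem, hp]
  | mu x φ ih =>
    refine (preimage_slfp (Prod.mk_left_injective p) fun W => ?_).symm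
    rw [← ih, update_slice]
  | nu x φ ih =>
    refine (preimage_sgfp (Prod.mk_left_injective p) fun W => ?_).symm
    rw [← ih, update_slice]

/-- F|p satisfies sm(φf,p) iff p satisfies φf w.r.t. F
(at the initial state, with empty environments). -/
theorem stmt1 {S A X P : Type} [DecidableEq X] (F : FTS S A P) (p : P)
    (phi : MuLf A X P) (hclosed : MuLf.closed phi) :
    (F.proj p).init ∈ MuL.sem (F.proj p) (MuLf.sm phi p) (fun _ => (∅ : Set S)) ↔
      (F.init, p) ∈ MuLf.sem F phi (fun _ => (∅ : Set (S × P))) := by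
  simpa [FTS.proj] using Set.ext_iff.mp (MuLf.sem_sm_eq_preimage F p phi fun _ => ∅) F.init

end SPLmu
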